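/- In tabular TD learning with Q-values initialized to zero and a delayed reward with r_t = 0 for t ≤ T, the Q-value q(s_{T−i}, a_{T−i}) receives its first nonzero update not earlier than at episode i, at which point its value is α^{i+1} r¹_{T+1}; hence the magnitude of information propagated back decays like α^{i+1} with learning rate α < 1. -/

import Mathlib

/-!
Along the chain the update at position `t` is the scalar recursion `q ← q + α (v - q)` whose
target `v` is the value at `t + 1` before the episode (the reward `r` at the end of the chain).
Started from `0`, such a recursion stays at `0` as long as its target does, and the first step
after the target becomes nonzero multiplies it by `α`. By induction on the distance `i` from the
end, the target of position `T - i` vanishes before episode `i` and equals `α ^ i r` there.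
-/

section TDRecursion

variable {α : ℝ} {q v : ℕ → ℝ}

theorem td_iterate_eq_zero_of_target_eq_zero (hq0 : q 0 = 0)
    (hq : ∀ j, q (j + 1) = q j + α * (v j - q j)) {n : ℕ} (hv : ∀ j < n, v j = 0) :
    ∀ j ≤ n, q j = 0 := by
  intro j hj
  induction j with
  | zero => exact hq0
  | succ j ih => rw [hq, ih (by omega), hv j (by omega)]; ring

theorem td_iterate_succ_eq_of_target_eq_zero (hq0 : q 0 = 0)
    (hq : ∀ j, q (j + 1) = q j + α * (v j - q j)) {n : ℕ} (hv : ∀ j < n, v j = 0) :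
    q (n + 1) = α * v n := by
  rw [hq, td_iterate_eq_zero_of_target_eq_zero hq0 hq hv n le_rfl]; ring

end TDRecursion

/-- Tabular TD (Q-learning) along a chain `s_0,…,s_T` with Q-values
initialized to zero and a delayed reward `r` given only at the end of the episode
(`r_t = 0` for `t ≤ T`):  the Q-value of the state-action pair at position `T - i`
receives its first nonzero update not earlier than at episode `i` (all earlier
episodes leave it at `0`), at which point its value is `α^(i+1) r`; hence the
magnitude of the information propagated back decays like `α^(i+1)` with learning rate
`α < 1`.  `Q j` denotes the Q-values after `j` episodes of online TD updates
`q ← q + α δ` with `δ_t = r_{t+1} + max_{a'} q(s_{t+1},a') - q(s_t,a_t)`. -/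
theorem td_delayed_reward_exponential_decay
    (T : ℕ) (α r : ℝ)
    (Q : ℕ → Fin (T + 1) → ℝ)
    (hQ0 : ∀ t, Q 0 t = 0)
    -- one full episode of online TD updates along the chain, with reward `r` at the end
    (hstep : ∀ i (t : Fin (T + 1)),
      Q (i + 1) t =
        Q i t + α * ((if ht : (t : ℕ) < T then Q i ⟨(t : ℕ) + 1, by omega⟩ else r)
          - Q i t)) :
    ∀ i : ℕ, ∀ hi : i ≤ T,
      (∀ j ≤ i, Q j ⟨T - i, by omega⟩ = 0) ∧
      Q (i + 1) ⟨T - i, by omega⟩ = α ^ (i + 1) * r := by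
  intro i
  induction i with
  | zero =>
    intro _
    set p : Fin (T + 1) := ⟨T - 0, by omega⟩
    have hq : ∀ j, Q (j + 1) p = Q j p + α * (r - Q j p) := fun j => by
      rw [hstep, dif_neg (by simp [p])]
    have htarget : ∀ j < 0, r = 0 := fun _ h => absurd h (Nat.not_lt_zero _)
    exact ⟨td_iterate_eq_zero_of_target_eq_zero (q := (Q · p)) (hQ0 p) hq htarget,
      by rw [td_iterate_succ_eq_of_target_eq_zero (q := (Q · p)) (hQ0 p) hq htarget, pow_one]⟩
  | succ i ih =>
    intro hi
    obtain ⟨hnext_eq_zero, hnext_first⟩ := ih (by omega)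
    set p : Fin (T + 1) := ⟨T - (i + 1), by omega⟩
    set p' : Fin (T + 1) := ⟨T - i, by omega⟩
    have hp : (p : ℕ) < T := by simp [p]; omega
    have hsucc : (⟨(p : ℕ) + 1, by omega⟩ : Fin (T + 1)) = p' := Fin.ext (by simp [p, p']; omega)
    have hq : ∀ j, Q (j + 1) p = Q j p + α * (Q j p' - Q j p) := fun j => by
      rw [hstep, dif_pos hp, hsucc]
    have htarget : ∀ j < i + 1, Q j p' = 0 := fun j hj => hnext_eq_zero j (by omega)
    exact ⟨td_iterate_eq_zero_of_target_eq_zero (q := (Q · p)) (hQ0 p) hq htarget,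
      by rw [td_iterate_succ_eq_of_target_eq_zero (q := (Q · p)) (hQ0 p) hq htarget, hnext_first]; ring⟩
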